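/- arXiv:1001.0100 — 3 statements merged into one kernel-verified Lean document; each statement's English description precedes it below -/
import Mathlib

section
/- Let p ≡ 1 (mod 8) be prime and fix √2, i ∈ 𝔽_p with (√2)² = 2, i² = -1. For the elliptic curve E: y² = x³ - x over 𝔽_p and η = 1 + [i], the set of x-coordinates of points P (over the algebraic closure) with η⁴(P) = ∞ and η³(P) ≠ ∞ is {1+√2, 1-√2, -1+√2, -1-√2}. -/
/-- The elliptic curve `y² = x³ - x` over the algebraic closure of `ℤ/pℤ`. -/
noncomputable def EcurveBar (p : ℕ) [Fact p.Prime] : WeierstrassCurve.Affine (AlgebraicClosure (ZMod p)) :=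
  { a₁ := 0, a₂ := 0, a₃ := 0, a₄ := -1, a₆ := 0 }

/-!
Write `ψ = [i]`. On `y² = x³ + a x` the map `(x, y) ↦ (-x, i y)` sends the chord through two points
to the chord through their images (slopes get multiplied by `-i`), so `ψ` is an additive
endomorphism, and `ψ ∘ ψ = -1`. Hence `η² = 1 + 2ψ + ψ² = 2ψ`, `η³ = 2ψ - 2` and `η⁴ = -4`, so
`η⁴ P = ∞` and `η³ P ≠ ∞` say that `Q = 2P` is a `2`-torsion point not fixed by `ψ`, i.e.
`Q = (e, 0)` with `e² = -a`, which for `a = -1` means `e = ±1`. The duplication formula gives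
`(x(2P) - e) · 4y² = ((x - e)² - 2e²)²`, so `2P = (e, 0)` exactly when `x = e ± √2 e`.
-/

open WeierstrassCurve.Affine

section IterateOneAddEndo

variable {G : Type*} [AddCommGroup G]

lemma iterate_two_of_map_map_eq_neg (ψ : G →+ G) (hψ : ∀ g, ψ (ψ g) = -g) (η : G → G)
    (hη : ∀ g, η g = g + ψ g) (g : G) : η^[2] g = 2 • ψ g := by
  simp only [Function.iterate_succ_apply', Function.iterate_zero_apply, hη, map_add, hψ]
  abel

lemma iterate_three_of_map_map_eq_neg (ψ : G →+ G) (hψ : ∀ g, ψ (ψ g) = -g) (η : G → G)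
    (hη : ∀ g, η g = g + ψ g) (g : G) : η^[3] g = ψ (2 • g) - 2 • g := by
  rw [Function.iterate_succ_apply', iterate_two_of_map_map_eq_neg ψ hψ η hη, hη, map_nsmul, hψ,
    map_nsmul]
  abel

lemma iterate_four_of_map_map_eq_neg (ψ : G →+ G) (hψ : ∀ g, ψ (ψ g) = -g) (η : G → G)
    (hη : ∀ g, η g = g + ψ g) (g : G) : η^[4] g = -(2 • 2 • g) := by
  rw [show 4 = 2 + 2 from rfl, Function.iterate_add_apply,
    iterate_two_of_map_map_eq_neg ψ hψ η hη, iterate_two_of_map_map_eq_neg ψ hψ η hη, map_nsmul,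
    hψ]
  simp only [smul_neg]

end IterateOneAddEndo

lemma sub_sq_eq_iff_of_sq_eq {F : Type*} [Field F] {x e s t : F} (hs : s ^ 2 = t) :
    (x - e) ^ 2 = t ↔ x = e + s ∨ x = e - s := by
  rw [← hs, sq_eq_sq_iff_eq_or_eq_neg, sub_eq_iff_eq_add', sub_eq_iff_eq_add', sub_eq_add_neg]

lemma WeierstrassCurve.Affine.Point.some_add_self_eq_zero_iff {F : Type*} [Field F] [DecidableEq F]
    {W : WeierstrassCurve.Affine F} {x y : F} (h : W.Nonsingular x y) :
    some x y h + some x y h = 0 ↔ y = W.negY x y :=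
  ⟨fun hQ => by_contra fun hy => some_ne_zero _ ((add_self_of_Y_ne hy).symm.trans hQ),
    add_self_of_Y_eq⟩

variable {F : Type*} [Field F]

def j1728Curve (a : F) : WeierstrassCurve.Affine F :=
  { a₁ := 0, a₂ := 0, a₃ := 0, a₄ := a, a₆ := 0 }

namespace j1728Curve

variable {a : F}

@[simp]
lemma negY_eq (x y : F) : (j1728Curve a).negY x y = -y := by
  simp [negY, j1728Curve]

lemma equation_iff_y_sq (x y : F) :
    (j1728Curve a).Equation x y ↔ y ^ 2 = x ^ 3 + a * x := by
  simp [equation_iff, j1728Curve]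

lemma nonsingular_iff_y_sq (x y : F) :
    (j1728Curve a).Nonsingular x y ↔ y ^ 2 = x ^ 3 + a * x ∧ (3 * x ^ 2 + a ≠ 0 ∨ y ≠ -y) := by
  rw [nonsingular_iff, equation_iff_y_sq]
  simp [j1728Curve, eq_comm]

lemma nonsingular_neg_mul {I : F} (hI : I ^ 2 = -1) {x y : F}
    (h : (j1728Curve a).Nonsingular x y) : (j1728Curve a).Nonsingular (-x) (I * y) := by
  have hI0 : I ≠ 0 := by rintro rfl; simp at hI
  rw [nonsingular_iff_y_sq] at h ⊢
  refine ⟨by linear_combination y ^ 2 * hI - h.1, ?_⟩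
  rw [← mul_neg, (mul_right_injective₀ hI0).ne_iff, neg_sq]
  exact h.2

lemma slope_neg_mul [DecidableEq F] {I : F} (hI : I ^ 2 = -1) {x₁ y₁ x₂ y₂ : F}
    (h₁ : (j1728Curve a).Equation x₁ y₁) (h₂ : (j1728Curve a).Equation x₂ y₂)
    (hxy : ¬(x₁ = x₂ ∧ y₁ = -y₂)) :
    (j1728Curve a).slope (-x₁) (-x₂) (I * y₁) (I * y₂) = -I * (j1728Curve a).slope x₁ x₂ y₁ y₂ := by
  have hI0 : I ≠ 0 := by rintro rfl; simp at hI
  by_cases hx : x₁ = x₂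
  · subst hx
    have hy : y₁ ≠ -y₂ := fun hy => hxy ⟨rfl, hy⟩
    obtain rfl : y₁ = y₂ := Y_eq_of_Y_ne h₁ h₂ rfl (by rwa [negY_eq])
    have h2y : 2 * y₁ ≠ 0 := fun h => hy (by linear_combination h)
    rw [slope_of_Y_ne rfl (by rwa [negY_eq, ← mul_neg, (mul_right_injective₀ hI0).ne_iff]),
      slope_of_Y_ne rfl (by rwa [negY_eq]), negY_eq, negY_eq, sub_neg_eq_add, sub_neg_eq_add,
      ← two_mul, ← two_mul, mul_div_assoc',
      div_eq_div_iff (by rw [mul_left_comm]; exact mul_ne_zero hI0 h2y) h2y]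
    simp only [j1728Curve]
    linear_combination 2 * y₁ * (3 * x₁ ^ 2 + a) * hI
  · have hx' : -x₁ ≠ -x₂ := neg_injective.ne hx
    have : x₁ - x₂ ≠ 0 := sub_ne_zero.mpr hx
    have : -x₁ - -x₂ ≠ 0 := sub_ne_zero.mpr hx'
    rw [slope_of_X_ne hx, slope_of_X_ne hx']
    field_simp
    ring

/-- The automorphism `[i]`. -/
def iMap {I : F} (hI : I ^ 2 = -1) : (j1728Curve a).Point → (j1728Curve a).Point
  | 0 => 0
  | .some _ _ h => .some _ _ (nonsingular_neg_mul hI h)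

lemma iMap_add [DecidableEq F] {I : F} (hI : I ^ 2 = -1) (P Q : (j1728Curve a).Point) :
    iMap hI (P + Q) = iMap hI P + iMap hI Q := by
  have hI0 : I ≠ 0 := by rintro rfl; simp at hI
  rcases P with _ | @⟨x₁, y₁, h₁⟩
  · rfl
  rcases Q with _ | @⟨x₂, y₂, h₂⟩
  · rfl
  by_cases hxy : x₁ = x₂ ∧ y₁ = -y₂
  · obtain ⟨rfl, rfl⟩ := hxy
    rw [Point.add_of_Y_eq rfl (by rw [negY_eq])]
    simp only [iMap]
    rw [Point.add_of_Y_eq rfl (by rw [negY_eq]; ring)]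
  have hxy' : ¬(-x₁ = -x₂ ∧ I * y₁ = -(I * y₂)) := by
    rwa [neg_inj, ← mul_neg, (mul_right_injective₀ hI0).eq_iff]
  rw [Point.add_some (by rwa [negY_eq]), iMap, iMap, iMap, Point.add_some (by rwa [negY_eq]),
    Point.some.injEq, slope_neg_mul hI h₁.1 h₂.1 hxy]
  set L := (j1728Curve a).slope x₁ x₂ y₁ y₂
  simp only [addX, addY, negAddY, negY_eq]
  simp only [j1728Curve]
  constructor
  · linear_combination (-L ^ 2) * hI
  · linear_combination (-I * L ^ 3) * hI

lemma iMap_iMap {I : F} (hI : I ^ 2 = -1) (P : (j1728Curve a).Point) :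
    iMap hI (iMap hI P) = -P := by
  rcases P with _ | @⟨x, y, h⟩
  · rfl
  · simp only [iMap, Point.neg_some, Point.some.injEq, negY_eq]
    constructor
    · ring
    · linear_combination y * hI

def iEndo [DecidableEq F] {I : F} (hI : I ^ 2 = -1) :
    (j1728Curve a).Point →+ (j1728Curve a).Point :=
  AddMonoidHom.mk' (iMap hI) (iMap_add hI)

lemma two_nsmul_eq_zero_and_iEndo_ne_iff [DecidableEq F] (hF : ringChar F ≠ 2) {I : F}
    (hI : I ^ 2 = -1) (Q : (j1728Curve a).Point) :
    2 • Q = 0 ∧ iEndo hI Q ≠ Q ↔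
      ∃ e, ∃ hT : (j1728Curve a).Nonsingular e 0, e ≠ 0 ∧ Q = .some e 0 hT := by
  rcases Q with _ | @⟨x, y, h⟩
  · refine iff_of_false (fun hQ => hQ.2 (map_zero _)) ?_
    rintro ⟨e, hT, -, hQ⟩
    exact Point.some_ne_zero hT hQ.symm
  rw [two_nsmul, Point.some_add_self_eq_zero_iff, negY_eq]
  constructor
  · rintro ⟨hy, hfix⟩
    obtain rfl := (Ring.eq_self_iff_eq_zero_of_char_ne_two hF).mp hy.symm
    refine ⟨x, h, fun hx => hfix ?_, rfl⟩
    subst hx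
    exact (Point.some.injEq ..).mpr ⟨neg_zero, mul_zero I⟩
  · rintro ⟨e, hT, he, hQ⟩
    obtain ⟨rfl, rfl⟩ := (Point.some.injEq ..).mp hQ
    refine ⟨neg_zero.symm, fun hfix => he ?_⟩
    exact (Ring.eq_self_iff_eq_zero_of_char_ne_two hF).mp ((Point.some.injEq ..).mp hfix).1

/-- The duplication formula, measured from the `2`-torsion point `(e, 0)`. -/
lemma addX_self_sub_mul_four_y_sq [DecidableEq F] {x y e : F} (h : (j1728Curve a).Equation x y)
    (hy : y ≠ -y) (hea : e ^ 2 = -a) :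
    ((j1728Curve a).addX x x ((j1728Curve a).slope x x y y) - e) * (4 * y ^ 2) =
      ((x - e) ^ 2 - 2 * e ^ 2) ^ 2 := by
  have h2y : 2 * y ≠ 0 := fun h => hy (by linear_combination h)
  have hL : (j1728Curve a).slope x x y y * (2 * y) = 3 * x ^ 2 + a := by
    rw [slope_of_Y_ne rfl (by rwa [negY_eq]), negY_eq, sub_neg_eq_add, ← two_mul,
      div_mul_cancel₀ _ h2y]
    simp only [j1728Curve]
    ring
  set L := (j1728Curve a).slope x x y y
  simp only [addX]
  simp only [j1728Curve]
  linear_combination (L * (2 * y) + 3 * x ^ 2 + a) * hL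
    - 4 * (2 * x + e) * (equation_iff_y_sq x y).mp h + (-2 * x ^ 2 - 4 * e * x - e ^ 2 + a) * hea

lemma some_add_self_eq_some_iff [DecidableEq F] (hF : ringChar F ≠ 2) {x y e : F}
    (h : (j1728Curve a).Nonsingular x y) (hT : (j1728Curve a).Nonsingular e 0) (he : e ≠ 0) :
    Point.some x y h + Point.some x y h = Point.some e 0 hT ↔ (x - e) ^ 2 = 2 * e ^ 2 := by
  have h2 : (2 : F) ≠ 0 := Ring.two_ne_zero hF
  have hea : e ^ 2 = -a := by
    have : e * (e ^ 2 + a) = 0 := by linear_combination -(equation_iff_y_sq e 0).mp hT.1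
    linear_combination (mul_eq_zero.mp this).resolve_left he
  by_cases hy : y = 0
  · subst hy
    rw [Point.add_self_of_Y_eq (by rw [negY_eq, neg_zero])]
    refine iff_of_false (Point.some_ne_zero hT).symm fun hx => he ?_
    have hx0 : x = 0 := by
      have : (2 * e) * x ^ 2 = 0 := by
        linear_combination -(equation_iff_y_sq x 0).mp h.1 - x * hx - x * hea
      exact pow_eq_zero_iff two_ne_zero |>.mp <|
        (mul_eq_zero.mp this).resolve_left (mul_ne_zero h2 he)
    subst hx0
    exact pow_eq_zero_iff two_ne_zero |>.mp (by linear_combination -hx)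
  have hyn : y ≠ -y := fun hy' => hy ((Ring.eq_self_iff_eq_zero_of_char_ne_two hF).mp hy'.symm)
  have hX := addX_self_sub_mul_four_y_sq h.1 hyn hea
  have hY := (equation_iff_y_sq _ _).mp <|
    equation_add h.1 h.1 fun hc => hyn ((negY_eq x y (a := a)) ▸ hc.2)
  have h4y : 4 * y ^ 2 ≠ 0 := by
    rw [show 4 * y ^ 2 = (2 * y) ^ 2 by ring]
    exact pow_ne_zero 2 (mul_ne_zero h2 hy)
  rw [Point.add_self_of_Y_ne (by rwa [negY_eq]), Point.some.injEq]
  set X := (j1728Curve a).addX x x ((j1728Curve a).slope x x y y)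
  constructor
  · rintro ⟨hXe, -⟩
    rw [hXe, sub_self, zero_mul, eq_comm, pow_eq_zero_iff two_ne_zero] at hX
    linear_combination hX
  · intro hx
    have hXe : X = e := by
      have : (X - e) * (4 * y ^ 2) = 0 := by rw [hX, hx]; ring
      exact sub_eq_zero.mp ((mul_eq_zero.mp this).resolve_right h4y)
    refine ⟨hXe, pow_eq_zero_iff two_ne_zero |>.mp ?_⟩
    rw [hY, hXe]
    linear_combination e * hea

lemma neg_one_nonsingular_and_ne_zero_iff (hF : ringChar F ≠ 2) {e : F} :
    (j1728Curve (-1 : F)).Nonsingular e 0 ∧ e ≠ 0 ↔ e = 1 ∨ e = -1 := by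
  rw [nonsingular_iff_y_sq]
  constructor
  · rintro ⟨⟨heq, -⟩, he⟩
    have : e * ((e - 1) * (e + 1)) = 0 := by linear_combination -heq
    rcases (mul_eq_zero.mp ((mul_eq_zero.mp this).resolve_left he)) with h | h
    · exact Or.inl (sub_eq_zero.mp h)
    · exact Or.inr (eq_neg_of_add_eq_zero_left h)
  · rintro (rfl | rfl) <;> norm_num [Ring.two_ne_zero hF]

lemma neg_one_exists_sub_sq_eq_iff (hF : ringChar F ≠ 2) {s : F} (hs : s ^ 2 = 2) (x : F) :
    (∃ e, ∃ _ : (j1728Curve (-1 : F)).Nonsingular e 0, e ≠ 0 ∧ (x - e) ^ 2 = 2 * e ^ 2) ↔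
      x = 1 + s ∨ x = 1 - s ∨ x = -1 + s ∨ x = -1 - s := by
  simp only [exists_prop, ← and_assoc, neg_one_nonsingular_and_ne_zero_iff hF, or_and_right,
    exists_or, exists_eq_left, sub_sq_eq_iff_of_sq_eq (hs.trans (by ring) : s ^ 2 = 2 * 1 ^ 2),
    sub_sq_eq_iff_of_sq_eq (hs.trans (by ring) : s ^ 2 = 2 * (-1) ^ 2), or_assoc]

end j1728Curve

open Classical in
theorem stmt8 (p : ℕ) [Fact p.Prime] (h8 : p % 8 = 1) (i s : ZMod p)
    (hi : i ^ 2 = -1) (hs : s ^ 2 = 2)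
    (φ : (EcurveBar p).Point → (EcurveBar p).Point) (hφ0 : φ 0 = 0)
    (hφ : ∀ (x y : AlgebraicClosure (ZMod p)) (h : (EcurveBar p).Nonsingular x y),
      ∃ h' : (EcurveBar p).Nonsingular (-x)
        (algebraMap (ZMod p) (AlgebraicClosure (ZMod p)) i * y),
        φ (WeierstrassCurve.Affine.Point.some _ _ h) = WeierstrassCurve.Affine.Point.some _ _ h')
    (η : (EcurveBar p).Point → (EcurveBar p).Point) (hη : ∀ P, η P = P + φ P)
    (x y : AlgebraicClosure (ZMod p)) (h : (EcurveBar p).Nonsingular x y) :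
    (η^[4] (WeierstrassCurve.Affine.Point.some _ _ h) = 0 ∧
      η^[3] (WeierstrassCurve.Affine.Point.some _ _ h) ≠ 0) ↔
      (x = 1 + algebraMap (ZMod p) (AlgebraicClosure (ZMod p)) s ∨
       x = 1 - algebraMap (ZMod p) (AlgebraicClosure (ZMod p)) s ∨
       x = -1 + algebraMap (ZMod p) (AlgebraicClosure (ZMod p)) s ∨
       x = -1 - algebraMap (ZMod p) (AlgebraicClosure (ZMod p)) s) := by
  have hF : ringChar (AlgebraicClosure (ZMod p)) ≠ 2 := by rw [ringChar.eq _ p]; omega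
  have hI : algebraMap (ZMod p) (AlgebraicClosure (ZMod p)) i ^ 2 = -1 := by
    rw [← map_pow, hi, map_neg, map_one]
  have hS : algebraMap (ZMod p) (AlgebraicClosure (ZMod p)) s ^ 2 = 2 := by
    rw [← map_pow, hs, map_ofNat]
  set ψ : (EcurveBar p).Point →+ (EcurveBar p).Point := j1728Curve.iEndo (a := -1) hI
  have hψ : ∀ P, ψ (ψ P) = -P := j1728Curve.iMap_iMap hI
  have hφψ : ∀ P, φ P = ψ P := by
    rintro (_ | ⟨x, y, h⟩)
    · exact hφ0.trans (map_zero ψ).symm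
    · exact (hφ x y h).choose_spec
  have hηψ : ∀ P, η P = P + ψ P := fun P => by rw [hη, hφψ]
  set P := Point.some x y h
  calc _ ↔ 2 • 2 • P = 0 ∧ ψ (2 • P) ≠ 2 • P := by
        rw [iterate_four_of_map_map_eq_neg ψ hψ η hηψ, iterate_three_of_map_map_eq_neg ψ hψ η hηψ,
          neg_eq_zero, sub_ne_zero]
    _ ↔ ∃ e, ∃ hT : (j1728Curve (-1)).Nonsingular e 0, e ≠ 0 ∧ P + P = .some e 0 hT := by
        rw [← two_nsmul]
        exact j1728Curve.two_nsmul_eq_zero_and_iEndo_ne_iff hF hI _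
    _ ↔ ∃ e, ∃ hT : (j1728Curve (-1)).Nonsingular e 0, e ≠ 0 ∧ (x - e) ^ 2 = 2 * e ^ 2 :=
        exists_congr fun e => exists_congr fun hT => and_congr_right fun he =>
          j1728Curve.some_add_self_eq_some_iff hF h hT he
    _ ↔ _ := j1728Curve.neg_one_exists_sub_sq_eq_iff hF hS x
end

section
/- Let p ≡ 1 (mod 8) be prime, E: y² = x³ - x over 𝔽_p, and η = 1 + [i] the degree-2 endomorphism. If both 1+√2 and 1-√2 are squares in 𝔽_p, then E(𝔽_p) contains a subgroup of order 32, namely the set of points killed by η⁵. -/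
/-- The elliptic curve `y² = x³ - x` over `ℤ/pℤ`, as a Weierstrass curve in affine coordinates. -/
noncomputable def Ecurve (p : ℕ) : WeierstrassCurve.Affine (ZMod p) :=
  { a₁ := 0, a₂ := 0, a₃ := 0, a₄ := -1, a₆ := 0 }

/-!
`[i]` is an automorphism of the curve with `[i] ∘ [i] = -1`, so `η = 1 + [i]` is an endomorphism
of `E(𝔽_p)` with `η⁴ = -4` and `ker η = {O, (0, 0)}`. For an endomorphism `f` of a group with
`ker f ⊆ f^n(A)`, each `f^k` with `k ≤ n` maps `ker f^(k+1)` onto `ker f` with kernel `ker f^k`,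
so `|ker f^(n+1)| = |ker f|^(n+1)`. It therefore suffices to find `Q` with `4Q = (0, 0)`.

A point `(x₀, y₀)` of `y² = x(x - 1)(x + 1)` with `x₀ = r₁²`, `x₀ - 1 = r₂²`, `x₀ + 1 = r₃²`,
`y₀ = r₁r₂r₃` is twice `((r₁ + r₂)(r₁ + r₃), (r₁ + r₂)(r₁ + r₃)(r₂ + r₃))`: the three factors of
`x(x - 1)(x + 1)` at that point are the products of pairs of the `rₐ + r_b`. With `u² = 1 + √2`,
`v² = 1 - √2` and `j = uv` we have `j² = -1`, so `(0, 0) = 2R` for `R = (j, j(j + 1))`, and `R` is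
halvable because `j`, `j - 1`, `j + 1` are the squares of `(1 + j)/√2`, `j(u - v)/√2`, `(u + v)/√2`.
-/

theorem AddMonoidHom.card_ker_comp {A B C : Type*} [AddGroup A] [AddGroup B] [AddGroup C]
    (g : A →+ B) (h : B →+ C) (hle : h.ker ≤ g.range) :
    Nat.card (h.comp g).ker = Nat.card g.ker * Nat.card h.ker := by
  set ψ := g.addSubgroupComap h.ker
  have hsurj : Function.Surjective ψ := by
    rintro ⟨b, hb⟩
    obtain ⟨a, rfl⟩ := hle hb
    exact ⟨⟨a, hb⟩, rfl⟩
  have hker : ψ.ker ≃ g.ker :=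
    (Equiv.subtypeEquivRight fun x => (mem_ker).trans Subtype.ext_iff).trans
      (Equiv.subtypeSubtypeEquivSubtype fun {a} (ha : g a = 0) => show h (g a) = 0 by simp [ha])
  rw [← AddMonoidHom.comap_ker, AddSubgroup.card_eq_card_quotient_mul_card_addSubgroup ψ.ker,
    Nat.card_congr (QuotientAddGroup.quotientKerEquivOfSurjective ψ hsurj).toEquiv,
    Nat.card_congr hker, mul_comm]

theorem AddMonoid.End.card_ker_pow_succ {A : Type*} [AddGroup A] (f : AddMonoid.End A)
    {n : ℕ} (hle : AddMonoidHom.ker f ≤ AddMonoidHom.range (f ^ n)) :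
    Nat.card (AddMonoidHom.ker (f ^ (n + 1))) = Nat.card (AddMonoidHom.ker f) ^ (n + 1) := by
  induction n with
  | zero => simp
  | succ n ih =>
    have hrange : AddMonoidHom.range (f ^ (n + 1)) ≤ AddMonoidHom.range (f ^ n) := by
      rintro _ ⟨a, rfl⟩
      exact ⟨f a, rfl⟩
    rw [pow_succ (Nat.card (AddMonoidHom.ker f)), ← ih (hle.trans hrange), pow_succ' f (n + 1)]
    exact AddMonoidHom.card_ker_comp (f ^ (n + 1)) f hle

open WeierstrassCurve.Affine

namespace Ecurve

variable {p : ℕ} [Fact p.Prime]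

lemma nonsingular_iff {x y : ZMod p} :
    (Ecurve p).Nonsingular x y ↔ y ^ 2 = x ^ 3 - x ∧ (3 * x ^ 2 - 1 ≠ 0 ∨ 2 * y ≠ 0) := by
  rw [nonsingular_iff', equation_iff]
  simp only [Ecurve]
  constructor <;> rintro ⟨h, h'⟩ <;> refine ⟨by linear_combination h, ?_⟩ <;> grind

@[simp]
lemma negY_eq (x y : ZMod p) : (Ecurve p).negY x y = -y := by
  simp [WeierstrassCurve.Affine.negY, Ecurve]

lemma nonsingular_of_sq_eq (hp2 : (2 : ZMod p) ≠ 0) {x y : ZMod p} (h : y ^ 2 = x ^ 3 - x) :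
    (Ecurve p).Nonsingular x y := by
  refine (equation_iff_nonsingular_of_Δ_ne_zero ?_).1 ?_
  · have hΔ : (Ecurve p).Δ = 2 ^ 6 := by
      simp only [WeierstrassCurve.Δ, WeierstrassCurve.b₂, WeierstrassCurve.b₄,
        WeierstrassCurve.b₆, WeierstrassCurve.b₈, Ecurve]
      ring
    rw [hΔ]
    exact pow_ne_zero _ hp2
  · rw [equation_iff]
    simp only [Ecurve]
    linear_combination h

lemma nonsingular_zero_zero : (Ecurve p).Nonsingular 0 0 :=
  nonsingular_iff.2 ⟨by ring, .inl (by simp)⟩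

noncomputable def origin : (Ecurve p).Point := .some _ _ nonsingular_zero_zero

lemma origin_ne_zero : (origin : (Ecurve p).Point) ≠ 0 :=
  Point.some_ne_zero _

lemma ne_zero_of_sq_eq_neg_one {i : ZMod p} (hi : i ^ 2 = -1) : i ≠ 0 := by
  rintro rfl
  simp at hi

lemma nonsingular_neg_mul {i x y : ZMod p} (hi : i ^ 2 = -1) (h : (Ecurve p).Nonsingular x y) :
    (Ecurve p).Nonsingular (-x) (i * y) := by
  obtain ⟨hxy, hd⟩ := nonsingular_iff.1 h
  refine nonsingular_iff.2 ⟨by linear_combination y ^ 2 * hi - hxy, ?_⟩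
  rw [neg_sq, mul_left_comm]
  exact hd.imp_right (mul_ne_zero (ne_zero_of_sq_eq_neg_one hi))

lemma slope_neg_mul {i : ZMod p} (hi : i ^ 2 = -1) (x₁ x₂ y₁ y₂ : ZMod p) :
    (Ecurve p).slope (-x₁) (-x₂) (i * y₁) (i * y₂) = -i * (Ecurve p).slope x₁ x₂ y₁ y₂ := by
  have hi0 := ne_zero_of_sq_eq_neg_one hi
  have hinv : i⁻¹ = -i := inv_eq_of_mul_eq_one_right (by linear_combination -hi)
  simp only [WeierstrassCurve.Affine.slope, negY_eq, neg_inj, ← mul_neg, mul_right_inj' hi0]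
  split_ifs
  · ring
  · simp only [Ecurve, ← mul_sub, mul_inv, hinv, div_eq_mul_inv]
    ring
  · rw [← mul_sub, neg_sub_neg, ← neg_sub x₁, div_neg]
    ring

lemma addX_neg {i : ZMod p} (hi : i ^ 2 = -1) (x₁ x₂ ℓ : ZMod p) :
    (Ecurve p).addX (-x₁) (-x₂) (-i * ℓ) = -(Ecurve p).addX x₁ x₂ ℓ := by
  simp only [addX, Ecurve]
  linear_combination ℓ ^ 2 * hi

lemma addY_neg_mul {i : ZMod p} (hi : i ^ 2 = -1) (x₁ x₂ y₁ ℓ : ZMod p) :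
    (Ecurve p).addY (-x₁) (-x₂) (i * y₁) (-i * ℓ) = i * (Ecurve p).addY x₁ x₂ y₁ ℓ := by
  simp only [addY, negAddY, addX, negY, Ecurve]
  linear_combination i * ℓ ^ 3 * hi

noncomputable def mulI {i : ZMod p} (hi : i ^ 2 = -1) : (Ecurve p).Point →+ (Ecurve p).Point where
  toFun
    | 0 => 0
    | .some _ _ h => .some _ _ (nonsingular_neg_mul hi h)
  map_zero' := rfl
  map_add' := by
    rintro (_ | ⟨x₁, y₁, h₁⟩) (_ | ⟨x₂, y₂, h₂⟩)
    any_goals rfl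
    by_cases hxy : x₁ = x₂ ∧ y₁ = (Ecurve p).negY x₂ y₂
    · rw [Point.add_of_Y_eq hxy.1 hxy.2,
        Point.add_of_Y_eq (congr_arg _ hxy.1) (by rw [hxy.2, negY_eq, negY_eq, mul_neg])]
    · have hxy' : ¬(-x₁ = -x₂ ∧ i * y₁ = (Ecurve p).negY (-x₂) (i * y₂)) := by
        simpa only [negY_eq, neg_inj, ← mul_neg, mul_right_inj' (ne_zero_of_sq_eq_neg_one hi)]
          using hxy
      rw [Point.add_some hxy, Point.add_some hxy']
      simp only [slope_neg_mul hi, addX_neg hi, addY_neg_mul hi]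

lemma mulI_some {i : ZMod p} (hi : i ^ 2 = -1) {x y : ZMod p} (h : (Ecurve p).Nonsingular x y) :
    mulI hi (.some _ _ h) = .some _ _ (nonsingular_neg_mul hi h) :=
  rfl

lemma mulI_mulI {i : ZMod p} (hi : i ^ 2 = -1) (P : (Ecurve p).Point) :
    mulI hi (mulI hi P) = -P := by
  rcases P with _ | ⟨x, y, h⟩
  · rfl
  · simp only [mulI_some, Point.neg_some, negY_eq, Point.some.injEq, neg_neg, true_and]
    linear_combination y * hi

lemma add_self_eq_some {x y a b ℓ : ZMod p} (h : (Ecurve p).Nonsingular x y)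
    (h' : (Ecurve p).Nonsingular a b) (hℓ : ℓ * (2 * y) = 3 * x ^ 2 - 1)
    (ha : a = ℓ ^ 2 - 2 * x) (hb : b = -(ℓ * (a - x) + y)) :
    Point.some _ _ h + Point.some _ _ h = Point.some _ _ h' := by
  -- a vertical tangent would make `(x, y)` singular
  have hy : 2 * y ≠ 0 := by
    rcases (nonsingular_iff.1 h).2 with h3 | h2
    · rintro h0; exact h3 (by rw [← hℓ, h0, mul_zero])
    · exact h2
  have hy' : y ≠ (Ecurve p).negY x y := by
    rw [negY_eq]; contrapose! hy; linear_combination hy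
  have hslope : (Ecurve p).slope x x y y = ℓ := by
    rw [slope_of_Y_ne rfl hy', negY_eq, div_eq_iff (by rwa [sub_neg_eq_add, ← two_mul])]
    simp only [Ecurve]
    linear_combination -hℓ
  simp only [Point.add_self_of_Y_ne hy', Point.some.injEq, hslope]
  constructor
  · simp only [addX, Ecurve]; linear_combination -ha
  · simp only [addY, negAddY, addX, negY, Ecurve]; linear_combination -hb + ℓ * ha

lemma exists_add_self_eq (hp2 : (2 : ZMod p) ≠ 0) {x₀ y₀ r₁ r₂ r₃ : ZMod p}
    (h : (Ecurve p).Nonsingular x₀ y₀) (h₁ : r₁ ^ 2 = x₀) (h₂ : r₂ ^ 2 = x₀ - 1)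
    (h₃ : r₃ ^ 2 = x₀ + 1) (hy : y₀ = r₁ * r₂ * r₃) :
    ∃ h' : (Ecurve p).Nonsingular ((r₁ + r₂) * (r₁ + r₃)) ((r₁ + r₂) * (r₁ + r₃) * (r₂ + r₃)),
      Point.some _ _ h' + Point.some _ _ h' = Point.some _ _ h := by
  set x := (r₁ + r₂) * (r₁ + r₃)
  have hx₁ : x - 1 = (r₁ + r₂) * (r₂ + r₃) := by linear_combination h₁ - h₂
  have hx₂ : x + 1 = (r₁ + r₃) * (r₂ + r₃) := by linear_combination h₁ - h₃
  have hP : (Ecurve p).Nonsingular x (x * (r₂ + r₃)) := by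
    apply nonsingular_of_sq_eq hp2
    linear_combination (-x) * ((x - 1) * hx₂ + (r₁ + r₃) * (r₂ + r₃) * hx₁)
  refine ⟨hP, add_self_eq_some hP h (ℓ := r₁ + r₂ + r₃) ?_ ?_ ?_⟩
  · linear_combination -(x + (r₁ + r₃) * (r₂ + r₃)) * hx₁ - (2 * x - 1) * hx₂
  · linear_combination h₁ - h₂ - h₃
  · linear_combination hy - (r₁ + r₂ + r₃) * h₁

noncomputable def eta {i : ZMod p} (hi : i ^ 2 = -1) : AddMonoid.End (Ecurve p).Point :=
  AddMonoidHom.id _ + mulI hi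

lemma eta_apply {i : ZMod p} (hi : i ^ 2 = -1) (P : (Ecurve p).Point) :
    eta hi P = P + mulI hi P :=
  rfl

lemma eta_pow_four_apply {i : ZMod p} (hi : i ^ 2 = -1) (P : (Ecurve p).Point) :
    (eta hi ^ 4) P = -(4 • P) := by
  have hsq : ∀ Q, eta hi (eta hi Q) = 2 • mulI hi Q := fun Q => by
    rw [eta_apply, eta_apply, map_add, mulI_mulI]
    abel
  change eta hi (eta hi (eta hi (eta hi P))) = _
  rw [hsq, hsq, map_nsmul, mulI_mulI, smul_smul, neg_nsmul]
  rfl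

lemma eta_eq_zero_iff (hp2 : (2 : ZMod p) ≠ 0) {i : ZMod p} (hi : i ^ 2 = -1)
    (P : (Ecurve p).Point) : eta hi P = 0 ↔ P = 0 ∨ P = origin := by
  rw [eta_apply, add_eq_zero_iff_eq_neg]
  rcases P with _ | ⟨x, y, h⟩
  · exact iff_of_true rfl (.inl rfl)
  · simp only [mulI_some, Point.neg_some, negY_eq, Point.some.injEq, origin, Point.some_ne_zero,
      false_or]
    constructor
    · rintro ⟨hx, hy⟩
      have hx0 : x = 0 := by
        simpa [hp2] using (show 2 * x = 0 by linear_combination hx)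
      have hy0 : y ^ 2 = 0 := by simpa [hx0] using (nonsingular_iff.1 h).1
      exact ⟨hx0, pow_eq_zero_iff two_ne_zero |>.1 hy0⟩
    · rintro ⟨rfl, rfl⟩
      simp

lemma card_ker_eta (hp2 : (2 : ZMod p) ≠ 0) {i : ZMod p} (hi : i ^ 2 = -1) :
    Nat.card (AddMonoidHom.ker (eta hi)) = 2 := by
  have hker : (AddMonoidHom.ker (eta hi) : Set (Ecurve p).Point) = {0, origin} := by
    ext P
    exact eta_eq_zero_iff hp2 hi P
  rw [← SetLike.coe_sort_coe, hker, Nat.card_coe_set_eq, Set.ncard_pair origin_ne_zero.symm]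

lemma exists_four_nsmul_eq_origin (hp2 : (2 : ZMod p) ≠ 0) {s : ZMod p} (hs : s ^ 2 = 2)
    (h₁ : IsSquare (1 + s)) (h₂ : IsSquare (1 - s)) :
    ∃ Q : (Ecurve p).Point, 4 • Q = origin := by
  obtain ⟨u, hu⟩ := h₁
  obtain ⟨v, hv⟩ := h₂
  set j := u * v
  have hj : j ^ 2 = -1 := by linear_combination -(v * v) * hu - (1 + s) * hv - hs
  set w := s⁻¹
  have hw : s * w = 1 := mul_inv_cancel₀ (by rintro rfl; exact hp2 (by simpa using hs.symm))
  obtain ⟨hR, hRR⟩ := exists_add_self_eq hp2 nonsingular_zero_zero (r₁ := 0) (r₂ := j) (r₃ := 1)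
    (by ring) (by linear_combination hj) (by ring) (by ring)
  simp only [zero_add, mul_one] at hR hRR
  have h₁ : ((1 + j) * w) ^ 2 = j := by
    linear_combination w ^ 2 * hj - j * w ^ 2 * hs + j * (s * w + 1) * hw
  have h₂ : (j * (u - v) * w) ^ 2 = j - 1 := by
    linear_combination -(1 - j) * (s * w + 1) * hw + (1 - j) * w ^ 2 * hs
      + (2 - 2 * j) * w ^ 2 * hj - j ^ 2 * w ^ 2 * (hu + hv)
  have h₃ : ((u + v) * w) ^ 2 = j + 1 := by
    linear_combination (1 + j) * (s * w + 1) * hw - (1 + j) * w ^ 2 * hs - w ^ 2 * (hu + hv)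
  have hy : j * (j + 1) = (1 + j) * w * (j * (u - v) * w) * ((u + v) * w) := by
    linear_combination (1 + j) * j * (-(s ^ 2 * w ^ 2 + s * w + 1) * hw + s * w ^ 3 * hs
      + w ^ 3 * (hu - hv))
  obtain ⟨hQ, hQQ⟩ := exists_add_self_eq hp2 hR h₁ h₂ h₃ hy
  exact ⟨_, by rw [show 4 = 2 + 2 from rfl, add_nsmul, two_nsmul, hQQ, hRR]; rfl⟩

lemma ker_eta_le_range_eta_pow_four (hp2 : (2 : ZMod p) ≠ 0) {i s : ZMod p} (hi : i ^ 2 = -1)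
    (hs : s ^ 2 = 2) (h₁ : IsSquare (1 + s)) (h₂ : IsSquare (1 - s)) :
    AddMonoidHom.ker (eta hi) ≤ AddMonoidHom.range (eta hi ^ 4) := by
  obtain ⟨Q, hQ⟩ := exists_four_nsmul_eq_origin hp2 hs h₁ h₂
  intro P hP
  rcases (eta_eq_zero_iff hp2 hi P).1 hP with rfl | rfl
  · exact zero_mem _
  · exact ⟨-Q, (eta_pow_four_apply hi (-Q)).trans (by rw [neg_nsmul, neg_neg, hQ])⟩

end Ecurve

open Ecurve in
theorem stmt15 (p : ℕ) [Fact p.Prime] (h8 : p % 8 = 1) (i s : ZMod p)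
    (hi : i ^ 2 = -1) (hs : s ^ 2 = 2)
    (h1 : IsSquare (1 + s)) (h2 : IsSquare (1 - s))
    (φ : (Ecurve p).Point → (Ecurve p).Point) (hφ0 : φ 0 = 0)
    (hφ : ∀ (x y : ZMod p) (h : (Ecurve p).Nonsingular x y),
      ∃ h' : (Ecurve p).Nonsingular (-x) (i * y),
        φ (WeierstrassCurve.Affine.Point.some _ _ h) = WeierstrassCurve.Affine.Point.some _ _ h')
    (η : (Ecurve p).Point → (Ecurve p).Point) (hη : ∀ P, η P = P + φ P) :
    ∃ G : AddSubgroup (Ecurve p).Point,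
      Nat.card G = 32 ∧ ∀ P : (Ecurve p).Point, P ∈ G ↔ η^[5] P = 0 := by
  have hp2 : (2 : ZMod p) ≠ 0 := by
    intro h
    have hdvd : p ∣ 2 := (ZMod.natCast_eq_zero_iff 2 p).1 (by exact_mod_cast h)
    have := (Nat.prime_dvd_prime_iff_eq Fact.out Nat.prime_two).1 hdvd
    omega
  have hφI : ∀ P, φ P = mulI hi P := by
    rintro (_ | ⟨x, y, h⟩)
    · exact hφ0
    · exact (hφ x y h).choose_spec
  have hηeta : η = eta hi := funext fun P => by rw [hη, hφI, eta_apply]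
  refine ⟨AddMonoidHom.ker (eta hi ^ 5), ?_, fun P => ?_⟩
  · rw [show 32 = 2 ^ (4 + 1) by norm_num, ← card_ker_eta hp2 hi]
    exact AddMonoid.End.card_ker_pow_succ _ (ker_eta_le_range_eta_pow_four hp2 hi hs h1 h2)
  · rw [AddMonoidHom.mem_ker, hηeta]
    rfl
end

section
/- Let p ≡ 1 (mod 8) be prime and write p = a² + b² with a odd, b even, a + b ≡ 1 (mod 4). If 32 divides (a-1)² + b², then the group E(𝔽_p) of points of y² = x³ - x over 𝔽_p contains an element of order 8. -/
open WeierstrassCurve WeierstrassCurve.Affine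

def WeierstrassCurve.ofRoots {R : Type*} [CommRing R] (e₁ e₂ e₃ : R) : WeierstrassCurve R where
  a₁ := 0
  a₂ := -(e₁ + e₂ + e₃)
  a₃ := 0
  a₄ := e₁ * e₂ + e₁ * e₃ + e₂ * e₃
  a₆ := -(e₁ * e₂ * e₃)

namespace WeierstrassCurve.ofRoots

variable {F : Type*} [Field F] {e₁ e₂ e₃ : F}

lemma equation_iff (x y : F) :
    (ofRoots e₁ e₂ e₃).toAffine.Equation x y ↔ y ^ 2 = (x - e₁) * (x - e₂) * (x - e₃) := by
  rw [Affine.equation_iff]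
  simp only [ofRoots]
  constructor <;> intro h <;> linear_combination h

lemma negY_eq (x y : F) : (ofRoots e₁ e₂ e₃).toAffine.negY x y = -y := by
  simp [ofRoots]

lemma nonsingular_of_Y_ne_zero [NeZero (2 : F)] {x y : F}
    (h : (ofRoots e₁ e₂ e₃).toAffine.Equation x y) (hy : y ≠ 0) :
    (ofRoots e₁ e₂ e₃).toAffine.Nonsingular x y :=
  (nonsingular_iff' _ _).mpr ⟨h, Or.inr (by simpa [ofRoots] using ⟨two_ne_zero, hy⟩)⟩

lemma nonsingular_root (h₁₂ : e₁ ≠ e₂) (h₁₃ : e₁ ≠ e₃) :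
    (ofRoots e₁ e₂ e₃).toAffine.Nonsingular e₁ 0 := by
  refine (nonsingular_iff' _ _).mpr ⟨(equation_iff _ _).mpr (by ring), Or.inl ?_⟩
  have : (e₁ - e₂) * (e₁ - e₃) ≠ 0 := mul_ne_zero (sub_ne_zero.mpr h₁₂) (sub_ne_zero.mpr h₁₃)
  simp only [ofRoots]
  contrapose! this
  linear_combination -this

lemma two_nsmul_some_root [DecidableEq F] (h : (ofRoots e₁ e₂ e₃).toAffine.Nonsingular e₁ 0) :
    2 • Point.some _ _ h = 0 :=
  (two_nsmul _).trans (Point.add_self_of_Y_eq (by rw [negY_eq, neg_zero]))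

/- With `X = x₀ + r₁r₂ + r₁r₃ + r₂r₃` each `X - eᵢ` factors as `(rᵢ + rⱼ)(rᵢ + rₖ)`, which gives the
`Y`-coordinate, and the tangent at `(X, Y)` has slope `r₁ + r₂ + r₃`. -/
lemma exists_two_nsmul_eq_some [DecidableEq F] [NeZero (2 : F)]
    (h₁₂ : e₁ ≠ e₂) (h₁₃ : e₁ ≠ e₃) (h₂₃ : e₂ ≠ e₃) {x₀ y₀ r₁ r₂ r₃ : F}
    (h₀ : (ofRoots e₁ e₂ e₃).toAffine.Nonsingular x₀ y₀)
    (hr₁ : r₁ ^ 2 = x₀ - e₁) (hr₂ : r₂ ^ 2 = x₀ - e₂) (hr₃ : r₃ ^ 2 = x₀ - e₃) :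
    ∃ (y : F) (h : (ofRoots e₁ e₂ e₃).toAffine.Nonsingular (x₀ + r₁ * r₂ + r₁ * r₃ + r₂ * r₃) y),
      2 • Point.some _ _ h = Point.some _ _ h₀ := by
  set X := x₀ + r₁ * r₂ + r₁ * r₃ + r₂ * r₃ with hX
  have hA : r₂ + r₃ ≠ 0 := fun h => h₂₃ (by linear_combination (r₃ - r₂) * h - hr₃ + hr₂)
  have hB : r₁ + r₃ ≠ 0 := fun h => h₁₃ (by linear_combination (r₃ - r₁) * h - hr₃ + hr₁)
  have hC : r₁ + r₂ ≠ 0 := fun h => h₁₂ (by linear_combination (r₂ - r₁) * h - hr₂ + hr₁)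
  have hX₁ : X - e₁ = (r₁ + r₂) * (r₁ + r₃) := by linear_combination hX - hr₁
  have hX₂ : X - e₂ = (r₁ + r₂) * (r₂ + r₃) := by linear_combination hX - hr₂
  have hX₃ : X - e₃ = (r₁ + r₃) * (r₂ + r₃) := by linear_combination hX - hr₃
  set Y := (r₁ + r₂) * (r₁ + r₃) * (r₂ + r₃) with hY
  have h2Y : 2 * Y ≠ 0 := mul_ne_zero two_ne_zero (mul_ne_zero (mul_ne_zero hC hB) hA)
  have h : (ofRoots e₁ e₂ e₃).toAffine.Nonsingular X Y :=
    nonsingular_of_Y_ne_zero ((equation_iff _ _).mpr (by rw [hX₁, hX₂, hX₃]; ring))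
      (right_ne_zero_of_mul h2Y)
  have hYneg : Y ≠ (ofRoots e₁ e₂ e₃).toAffine.negY X Y := by
    rw [negY_eq]
    exact fun hc => h2Y (by linear_combination hc)
  have hslope : (ofRoots e₁ e₂ e₃).toAffine.slope X X Y Y = r₁ + r₂ + r₃ := by
    rw [slope_of_Y_ne rfl hYneg, negY_eq, div_eq_iff (by rwa [sub_neg_eq_add, ← two_mul])]
    have hderiv : 3 * X ^ 2 + 2 * (ofRoots e₁ e₂ e₃).a₂ * X + (ofRoots e₁ e₂ e₃).a₄ =
        (X - e₁) * (X - e₂) + (X - e₁) * (X - e₃) + (X - e₂) * (X - e₃) := by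
      simp only [ofRoots]; ring
    simp only [ofRoots, zero_mul, sub_zero] at hderiv ⊢
    rw [hderiv, hX₁, hX₂, hX₃, hY]
    ring
  have hx₀ : (ofRoots e₁ e₂ e₃).toAffine.addX X X (r₁ + r₂ + r₃) = x₀ := by
    simp only [addX, ofRoots]
    linear_combination hr₁ + hr₂ + hr₃ + 2 * hX
  have hdouble :
      2 • Point.some _ _ h = Point.some _ _ h₀ ∨ 2 • Point.some _ _ h = -Point.some _ _ h₀ := by
    rw [two_nsmul, Point.add_self_of_Y_ne hYneg]
    exact Point.X_eq_iff.mp (hslope ▸ hx₀)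
  rcases hdouble with hdouble | hdouble
  · exact ⟨Y, h, hdouble⟩
  · exact ⟨_, (nonsingular_neg ..).mpr h, by rw [← Point.neg_some h, smul_neg, hdouble, neg_neg]⟩

theorem exists_addOrderOf_eq_eight [DecidableEq F] [NeZero (2 : F)] {i : F} (hi : i ^ 2 = -1)
    (hsqi : IsSquare i) (hsqi₁ : IsSquare (i + 1)) :
    ∃ P : (ofRoots (0 : F) 1 (-1)).toAffine.Point, addOrderOf P = 8 := by
  obtain ⟨u, hu⟩ : IsSquare (i - 1) := by
    rw [show i - 1 = i * (i + 1) by linear_combination -hi]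
    exact hsqi.mul hsqi₁
  obtain ⟨s, hs⟩ := hsqi
  obtain ⟨t, ht⟩ := hsqi₁
  have h01 : (0 : F) ≠ 1 := zero_ne_one
  have h0m1 : (0 : F) ≠ -1 := (neg_ne_zero.mpr one_ne_zero).symm
  have h1m1 : (1 : F) ≠ -1 := fun h => two_ne_zero (α := F) (by linear_combination h)
  have hT := nonsingular_root h01 h0m1
  obtain ⟨_, hQ, hQT⟩ := exists_two_nsmul_eq_some h01 h0m1 h1m1 hT (r₁ := 0) (r₂ := i) (r₃ := 1)
    (by ring) (by linear_combination hi) (by ring)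
  obtain ⟨_, hP, hPQ⟩ := exists_two_nsmul_eq_some h01 h0m1 h1m1 hQ (r₁ := s) (r₂ := u) (r₃ := t)
    (by linear_combination -hs) (by linear_combination -hu) (by linear_combination -ht)
  have h4P : 4 • Point.some _ _ hP = Point.some _ _ hT := by
    rw [show 4 = 2 * 2 from rfl, mul_nsmul, hPQ, hQT]
  refine ⟨Point.some _ _ hP, addOrderOf_eq_prime_pow (p := 2) (n := 2) ?_ ?_⟩
  · rw [show 2 ^ 2 = 4 from rfl, h4P]
    exact Point.some_ne_zero hT
  · rw [show 2 ^ (2 + 1) = 4 * 2 from rfl, mul_nsmul, h4P, two_nsmul_some_root]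

end WeierstrassCurve.ofRoots

lemma Ecurve_eq_ofRoots (p : ℕ) : Ecurve p = (ofRoots 0 1 (-1)).toAffine := by
  ext <;> simp [Ecurve, ofRoots]

lemma isCoprime_of_sq_add_sq_eq_prime {p : ℕ} (hp : p.Prime) {a b : ℤ}
    (hab : (p : ℤ) = a ^ 2 + b ^ 2) : IsCoprime a b := by
  refine isCoprime_of_prime_dvd ?_ fun q hq hqa hqb => ?_
  · rintro ⟨rfl, rfl⟩
    exact hp.ne_zero (by exact_mod_cast hab)
  · have hqq : q * q ∣ (p : ℤ) :=
      hab ▸ sq q ▸ dvd_add (pow_dvd_pow_of_dvd hqa 2) (pow_dvd_pow_of_dvd hqb 2)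
    exact hq.not_isUnit ((Nat.prime_iff_prime_int.mp hp).squarefree q hqq)

lemma add_emod_eight_eq_one_of_dvd {a b : ℤ} (h : 32 ∣ (a - 1) ^ 2 + b ^ 2) :
    (a + b) % 8 = 1 := by
  have key : ∀ x y : ZMod 32, (x - 1) ^ 2 + y ^ 2 = 0 →
      ZMod.castHom (show 8 ∣ 32 by norm_num) (ZMod 8) (x + y) = 1 := by
    decide
  have h32 : ((a : ZMod 32) - 1) ^ 2 + (b : ZMod 32) ^ 2 = 0 := by
    exact_mod_cast (ZMod.intCast_zmod_eq_zero_iff_dvd _ 32).mpr h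
  have h8 := key _ _ h32
  rw [map_add, map_intCast, map_intCast] at h8
  exact_mod_cast (ZMod.intCast_eq_intCast_iff' (a + b) 1 8).mp (by push_cast; exact h8)

lemma jacobiSym_natCast_eq_one_of_modEq {p n : ℕ} (hp : p % 4 = 1) (hn : Odd n) {d e : ℤ}
    (hd : IsCoprime d n) (hpn : (p : ℤ) ≡ e * d ^ 2 [ZMOD n]) (he : jacobiSym e n = 1) :
    jacobiSym n p = 1 := by
  rw [jacobiSym.quadratic_reciprocity_one_mod_four' hn hp, jacobiSym.mod_left' hpn,
    jacobiSym.mul_left, jacobiSym.sq_one' (Int.isCoprime_iff_gcd_eq_one.mp hd), he, one_mul]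

namespace ZMod

variable {p : ℕ} [Fact p.Prime]

lemma isSquare_intCast_of_modEq (hp : p % 4 = 1) {c d e : ℤ} (hc : Odd c) (hd : IsCoprime d c)
    (hpc : (p : ℤ) ≡ e * d ^ 2 [ZMOD c]) (he : jacobiSym e c.natAbs = 1) :
    IsSquare (c : ZMod p) := by
  apply isSquare_of_jacobiSym_eq_one
  obtain ⟨n, rfl | rfl⟩ := c.eq_nat_or_neg
  · exact jacobiSym_natCast_eq_one_of_modEq hp (by simpa using hc) hd hpc (by simpa using he)
  · rw [jacobiSym.neg _ (Nat.odd_iff.mpr (by omega)), χ₄_nat_one_mod_four hp, one_mul]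
    exact jacobiSym_natCast_eq_one_of_modEq hp (by simpa using hc)
      ((IsCoprime.neg_right_iff _ _).mp hd) (Int.modEq_neg.mp hpc) (by simpa using he)

lemma isSquare_of_sq_eq_neg_one (hp : p % 8 = 1) {i : ZMod p} (hi : i ^ 2 = -1) : IsSquare i := by
  have hi0 : i ≠ 0 := by rintro rfl; simp at hi
  rw [euler_criterion p hi0, show p / 2 = 2 * (2 * (p / 8)) by omega, pow_mul, hi, pow_mul]
  simp

lemma intCast_div_sq_eq_neg_one {a b : ℤ} (hab : (p : ℤ) = a ^ 2 + b ^ 2) :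
    ((a : ZMod p) / b) ^ 2 = -1 := by
  have habZ : (a : ZMod p) ^ 2 + (b : ZMod p) ^ 2 = 0 := by
    have := congrArg (Int.cast : ℤ → ZMod p) hab
    push_cast at this
    rw [← this, natCast_self]
  have hb0 : (b : ZMod p) ≠ 0 := by
    intro hb0
    have ha0 : (a : ZMod p) = 0 := pow_eq_zero_iff two_ne_zero |>.mp (by simpa [hb0] using habZ)
    rw [intCast_zmod_eq_zero_iff_dvd] at ha0 hb0
    exact (Nat.prime_iff_prime_int.mp Fact.out).not_isUnit
      ((isCoprime_of_sq_add_sq_eq_prime Fact.out hab).isUnit_of_dvd' ha0 hb0)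
  rw [div_pow, div_eq_iff (pow_ne_zero 2 hb0)]
  linear_combination habZ

lemma isSquare_intCast_of_sq_add_sq (hp : p % 4 = 1) {a b : ℤ} (hab : (p : ℤ) = a ^ 2 + b ^ 2)
    (ha : Odd a) : IsSquare (a : ZMod p) :=
  isSquare_intCast_of_modEq hp ha (isCoprime_of_sq_add_sq_eq_prime Fact.out hab).symm (e := 1)
    (Int.modEq_iff_dvd.mpr ⟨-a, by rw [hab]; ring⟩) (jacobiSym.one_left _)

lemma isSquare_intCast_add_of_sq_add_sq (hp : p % 4 = 1) {a b : ℤ}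
    (hab : (p : ℤ) = a ^ 2 + b ^ 2) (hab8 : (a + b) % 8 = 1 ∨ (a + b) % 8 = 7) :
    IsSquare ((a : ZMod p) + b) := by
  have hodd : Odd (a + b) := Int.odd_iff.mpr (by omega)
  have habs8 : (a + b).natAbs % 8 = 1 ∨ (a + b).natAbs % 8 = 7 := by omega
  exact_mod_cast isSquare_intCast_of_modEq hp hodd
    (by simpa using (isCoprime_of_sq_add_sq_eq_prime Fact.out hab).symm.add_mul_left_right 1)
    (e := 2) (Int.modEq_iff_dvd.mpr ⟨b - a, by rw [hab]; ring⟩)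
    (by rw [jacobiSym.at_two (Int.natAbs_odd.mpr hodd), χ₈_nat_eq_if_mod_eight,
      if_neg (by omega), if_pos habs8])

lemma isSquare_intCast_div_add_one (h8 : p % 8 = 1) {a b : ℤ} (hab : (p : ℤ) = a ^ 2 + b ^ 2)
    (ha : Odd a) (hab8 : (a + b) % 8 = 1) : IsSquare ((a : ZMod p) / b + 1) := by
  have hi := intCast_div_sq_eq_neg_one hab
  obtain ⟨-, hb0⟩ : (a : ZMod p) ≠ 0 ∧ (b : ZMod p) ≠ 0 :=
    div_ne_zero_iff.mp fun h => by simp [h] at hi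
  have h2 : (2 : ZMod p) ≠ 0 := Ring.two_ne_zero (by rw [ringChar_zmod_n]; omega)
  have hab0 : (a : ZMod p) + b ≠ 0 := fun h => h2 (by
    rw [show (a : ZMod p) = -b by linear_combination h, neg_div_self hb0] at hi
    linear_combination hi)
  rw [show (a : ZMod p) / b + 1 = 2 * a / (a + b) by
    rw [div_add_one hb0, div_eq_div_iff hb0 hab0]
    rw [div_pow, div_eq_iff (pow_ne_zero 2 hb0)] at hi
    linear_combination hi]
  exact (((exists_sq_eq_two_iff (by omega)).mpr (Or.inl h8)).mul
    (isSquare_intCast_of_sq_add_sq (by omega) hab ha)).div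
    (isSquare_intCast_add_of_sq_add_sq (by omega) hab (Or.inl hab8))

end ZMod

theorem stmt16_general (p : ℕ) [Fact p.Prime] (h8 : p % 8 = 1)
    (a b : ℤ) (hab : (p : ℤ) = a ^ 2 + b ^ 2)
    (ha : Odd a)
    (hdvd : (32 : ℤ) ∣ (a - 1) ^ 2 + b ^ 2) :
    ∃ P : (Ecurve p).Point, addOrderOf P = 8 := by
  have : NeZero (2 : ZMod p) := ⟨Ring.two_ne_zero (by rw [ZMod.ringChar_zmod_n]; omega)⟩
  have hi := ZMod.intCast_div_sq_eq_neg_one hab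
  rw [Ecurve_eq_ofRoots]
  exact ofRoots.exists_addOrderOf_eq_eight hi (ZMod.isSquare_of_sq_eq_neg_one h8 hi)
    (ZMod.isSquare_intCast_div_add_one h8 hab ha (add_emod_eight_eq_one_of_dvd hdvd))

theorem stmt16 (p : ℕ) [Fact p.Prime] (h8 : p % 8 = 1)
    (a b : ℤ) (hab : (p : ℤ) = a ^ 2 + b ^ 2)
    (ha : Odd a) (hb : Even b) (habm : (a + b) % 4 = 1)
    (hdvd : (32 : ℤ) ∣ (a - 1) ^ 2 + b ^ 2) :
    ∃ P : (Ecurve p).Point, addOrderOf P = 8 :=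
  stmt16_general p h8 a b hab ha hdvd
end
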